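/- arXiv:1708.01754 — 2 statements merged into one kernel-verified Lean document; each statement's English description precedes it below -/
import Mathlib

section
/- Let (X_s)_{s∈S} be a family of equiconnected spaces (X_s, λ_s) and a ∈ ∏_{s∈S} X_s. Then the small box product ⊡_{s∈S} X_s = σ(a) with the box topology is equiconnected, with equiconnecting map λ(z, w, t) = (λ_s(z_s, w_s, t))_{s∈S}. -/
open Filter Topology Set

/-- The box topology on a product of topological spaces: generated by all boxes
`∏ s, G s` with each `G s` open. -/
def boxTopology {S : Type*} {X : S → Type*} [∀ s, TopologicalSpace (X s)] :
    TopologicalSpace (∀ s, X s) :=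
  TopologicalSpace.generateFrom
    {U | ∃ G : ∀ s, Set (X s), (∀ s, IsOpen (G s)) ∧ U = Set.univ.pi G}

/-- `σ(a)`: the set of points differing from `a` in only finitely many coordinates. -/
def smallBox {S : Type*} {X : S → Type*} (a : ∀ s, X s) : Set (∀ s, X s) :=
  {x | {s | x s ≠ a s}.Finite}

/- Near a point `(z, w, t)` the only coordinates that constrain the time
parameter are the finitely many `s` with `z s ≠ a s` or `w s ≠ a s`; they give a closed
neighbourhood `T` of `t`. In the remaining coordinates `λ_s(a_s, a_s, ·) ≡ a_s`, so there
every time works. Since `T` is compact, the tube lemma then gives, in every coordinate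
separately, open sets around `z s` and `w s` that work uniformly for all times in `T`, and
these form an open box. -/

theorem exists_isOpen_prod_forall_mem_of_isCompact {X Y K Z : Type*} [TopologicalSpace X]
    [TopologicalSpace Y] [TopologicalSpace K] [TopologicalSpace Z] {f : X × Y × K → Z}
    (hf : Continuous f) {O : Set Z} (hO : IsOpen O) {T : Set K} (hT : IsCompact T) {x : X}
    {y : Y} (h : ∀ t ∈ T, f (x, y, t) ∈ O) :
    ∃ U V, IsOpen U ∧ IsOpen V ∧ x ∈ U ∧ y ∈ V ∧
      ∀ x' ∈ U, ∀ y' ∈ V, ∀ t ∈ T, f (x', y', t) ∈ O := by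
  have hf' : Continuous fun q : (X × Y) × K => f (q.1.1, q.1.2, q.2) := by fun_prop
  obtain ⟨UV, T', hUV, -, hxy, hTT', hsub⟩ := generalized_tube_lemma isCompact_singleton hT
    (hO.preimage hf') (by
      rintro ⟨⟨x', y'⟩, t⟩ ⟨hxy, ht⟩
      obtain ⟨rfl, rfl⟩ := Prod.mk.inj hxy
      exact h t ht)
  obtain ⟨U, V, hU, hV, hx, hy, hUV_sub⟩ := isOpen_prod_iff.mp hUV x y (hxy rfl)
  exact ⟨U, V, hU, hV, hx, hy, fun x' hx' y' hy' t ht =>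
    hsub (mk_mem_prod (hUV_sub (mk_mem_prod hx' hy')) (hTT' ht))⟩

section

variable {S : Type*} {X : S → Type*}

theorem map₂_mem_smallBox {a z w : ∀ s, X s} {f : ∀ s, X s → X s → X s}
    (hf : ∀ s x, f s x x = x) (hz : z ∈ smallBox a) (hw : w ∈ smallBox a) :
    (fun s => f s (z s) (w s)) ∈ smallBox a := by
  refine (hz.union hw).subset fun s hs => ?_
  by_contra h
  simp only [mem_union, mem_ofPred_eq, not_or, not_not] at h hs
  exact hs (by rw [h.1, h.2, hf])

variable [∀ s, TopologicalSpace (X s)]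

attribute [local instance] boxTopology

theorem isOpen_pi_boxTopology {G : ∀ s, Set (X s)} (hG : ∀ s, IsOpen (G s)) :
    IsOpen (univ.pi G) :=
  TopologicalSpace.GenerateOpen.basic _ ⟨G, hG, rfl⟩

theorem continuous_smallBox_map₂ (lam : ∀ s, X s → X s → unitInterval → X s)
    (hcont : ∀ s, Continuous fun p : X s × X s × unitInterval => lam s p.1 p.2.1 p.2.2)
    (hd : ∀ s (x : X s) (t : unitInterval), lam s x x t = x) (a : ∀ s, X s) :
    Continuous fun p : smallBox a × smallBox a × unitInterval =>
      fun s => lam s (p.1.1 s) (p.2.1.1 s) p.2.2 := by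
  refine continuous_generateFrom_iff.mpr ?_
  rintro _ ⟨G, hG, rfl⟩
  refine isOpen_iff_mem_nhds.mpr ?_
  rintro ⟨z, w, t⟩ hp
  simp only [mem_preimage, mem_univ_pi] at hp
  set F := {s | z.1 s ≠ a s} ∪ {s | w.1 s ≠ a s}
  have hF : ∀ᶠ t' in 𝓝 t, ∀ s ∈ F, lam s (z.1 s) (w.1 s) t' ∈ G s :=
    (z.2.union w.2).eventually_all.2 fun s _ =>
      ((hcont s).comp (by fun_prop : Continuous fun t' => (z.1 s, w.1 s, t'))).continuousAt
        ((hG s).mem_nhds (hp s))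
  obtain ⟨T, hT, hTclosed, hTF⟩ := exists_mem_nhds_isClosed_subset hF
  have hgood : ∀ s, ∀ t' ∈ T, lam s (z.1 s) (w.1 s) t' ∈ G s := by
    intro s t' ht'
    by_cases hs : s ∈ F
    · exact hTF ht' s hs
    · simp only [F, mem_union, mem_ofPred_eq, not_or, not_not] at hs
      have := hp s
      rwa [hs.1, hs.2, hd] at this ⊢
  choose U V hU hV hzU hwV hUV using fun s =>
    exists_isOpen_prod_forall_mem_of_isCompact (hcont s) (hG s) hTclosed.isCompact (hgood s)
  have hbox {B : ∀ s, Set (X s)} (hB : ∀ s, IsOpen (B s)) {x : smallBox a}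
      (hx : ∀ s, x.1 s ∈ B s) : Subtype.val ⁻¹' univ.pi B ∈ 𝓝 x :=
    ((isOpen_pi_boxTopology hB).preimage continuous_subtype_val).mem_nhds fun s _ => hx s
  filter_upwards [prod_mem_nhds (hbox hU hzU) (prod_mem_nhds (hbox hV hwV) hT)]
  rintro ⟨z', w', t'⟩ ⟨hz', hw', ht'⟩ s -
  exact hUV s _ (hz' s trivial) _ (hw' s trivial) _ ht'

end

theorem stmt_7 {S : Type*} {X : S → Type*} [∀ s, TopologicalSpace (X s)]
    (lam : ∀ s, X s → X s → unitInterval → X s)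
    (hcont : ∀ s, Continuous fun p : X s × X s × unitInterval => lam s p.1 p.2.1 p.2.2)
    (h0 : ∀ s (x y : X s), lam s x y 0 = x)
    (h1 : ∀ s (x y : X s), lam s x y 1 = y)
    (hd : ∀ s (x : X s) (t : unitInterval), lam s x x t = x)
    (a : ∀ s, X s) :
    letI : TopologicalSpace (∀ s, X s) := boxTopology
    ∃ Λ : ↥(smallBox a) × ↥(smallBox a) × unitInterval → ∀ s, X s,
      (∀ p, Λ p = fun s => lam s (p.1.1 s) (p.2.1.1 s) p.2.2) ∧
      (∀ p, Λ p ∈ smallBox a) ∧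
      Continuous Λ ∧
      (∀ z w : ↥(smallBox a), Λ (z, w, 0) = z.1) ∧
      (∀ z w : ↥(smallBox a), Λ (z, w, 1) = w.1) ∧
      (∀ z : ↥(smallBox a), ∀ t, Λ (z, z, t) = z.1) :=
  ⟨_, fun _ => rfl,
    fun p => map₂_mem_smallBox (f := fun s x y => lam s x y p.2.2) (fun s x => hd s x p.2.2)
      p.1.2 p.2.1.2,
    continuous_smallBox_map₂ lam hcont hd a, fun _ _ => funext fun s => h0 s _ _,
    fun _ _ => funext fun s => h1 s _ _, fun _ t => funext fun s => hd s _ t⟩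
end

section
/- Let X be a paracompact space, (Z_s)_{s∈S} a family of equiconnected metrizable spaces, a ∈ ∏_{s∈S} Z_s, and g : X → ⊡_{s∈S} Z_s a Baire-one map into the small box product σ(a). Then there exists a separately continuous map f : X² → ⊡_{s∈S} Z_s such that f(x,x) = g(x) for every x ∈ X. -/
open Filter Topology Set

/-!
Everything happens coordinatewise: for one metrizable factor `Z` with equiconnecting map `λ`,
base point `c` and continuous `hₙ → g`, we build a separately continuous `F` with `F x x = g x`
which is `c` as soon as `(hₙ x)ₙ` or `(hₙ y)ₙ` is constantly `c`.

Metrize `ℕ → Z` so that sequences at distance `r < 2⁻ⁿ` are `r`-close in coordinate `n`, and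
join the points `u 0, u 1, …` of a sequence by a path whose segments are given by `λ`. For
sequences `u ≠ v` put `F₀ u v` := the point of the path of `u` at parameter `≈ log₂ (1 / dist u v)`,
and `F₀ u u := lim u`. As `v → u` the parameter tends to infinity and the path to `lim u`; as
`u → v` the same happens, because the two coordinates of `u` that are involved are
`dist u v`-close to those of `v`. Then `F := λ(c, F₀, w)` for a weight `w` that is `1` on the
diagonal and `0` when either sequence is constantly `c`.

A sequence converging in the box topology moves only finitely many coordinates, so for fixed `x`
all but finitely many coordinates of `F x ·` and `F · x` are constantly `a s`, and continuity of
the slices for the box topology reduces to continuity of finitely many coordinates.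
-/

structure Equiconnection (Z : Type*) [TopologicalSpace Z] where
  toFun : Z → Z → unitInterval → Z
  continuous_uncurry : Continuous fun p : Z × Z × unitInterval => toFun p.1 p.2.1 p.2.2
  apply_zero : ∀ z w, toFun z w 0 = z
  apply_one : ∀ z w, toFun z w 1 = w
  apply_self : ∀ z t, toFun z z t = z

namespace Equiconnection

variable {Z : Type*} [TopologicalSpace Z]

instance : CoeFun (Equiconnection Z) fun _ => Z → Z → unitInterval → Z := ⟨toFun⟩

variable (e : Equiconnection Z)

theorem continuous_comp {W : Type*} [TopologicalSpace W] {u v : W → Z} {t : W → unitInterval}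
    (hu : Continuous u) (hv : Continuous v) (ht : Continuous t) :
    Continuous fun w => e (u w) (v w) (t w) :=
  e.continuous_uncurry.comp (hu.prodMk (hv.prodMk ht))

theorem eventually_forall_mem {z : Z} {G : Set Z} (hG : G ∈ 𝓝 z) :
    ∀ᶠ p in 𝓝 (z, z), ∀ t, e p.1 p.2 t ∈ G := by
  have hc : Continuous fun q : (Z × Z) × unitInterval => e q.1.1 q.1.2 q.2 :=
    e.continuous_comp (continuous_fst.comp continuous_fst) (continuous_snd.comp continuous_fst)
      continuous_snd
  have := isCompact_univ.eventually_forall_of_forall_eventually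
    (P := fun (p : Z × Z) (t : unitInterval) => e p.1 p.2 t ∈ G) (x₀ := (z, z)) fun t _ =>
      hc.continuousAt.preimage_mem_nhds (by simpa [e.apply_self] using hG)
  exact this.mono fun p hp t => hp t trivial

noncomputable def interpUpTo (u : ℕ → Z) (s : ℝ) : ℕ → Z
  | 0 => u 0
  | m + 1 => e (interpUpTo u s m) (u (m + 1)) (projIcc 0 1 zero_le_one (s - m))

theorem continuous_interpUpTo (m : ℕ) :
    Continuous fun p : (ℕ → Z) × ℝ => e.interpUpTo p.1 p.2 m := by
  induction m with
  | zero => exact (_root_.continuous_apply 0).comp continuous_fst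
  | succ m ih =>
    exact e.continuous_comp ih ((_root_.continuous_apply _).comp continuous_fst)
      (continuous_projIcc.comp (continuous_snd.sub continuous_const))

theorem interpUpTo_of_le {u : ℕ → Z} {s : ℝ} {m : ℕ} (hm : (m : ℝ) ≤ s) :
    e.interpUpTo u s m = u m := by
  cases m with
  | zero => rfl
  | succ m =>
    rw [interpUpTo, projIcc_of_right_le _ (by push_cast at hm; linarith)]
    exact e.apply_one _ _

theorem interpUpTo_eq_of_le {u : ℕ → Z} {s : ℝ} {m k : ℕ} (hs : s ≤ m) (hmk : m ≤ k) :
    e.interpUpTo u s k = e.interpUpTo u s m := by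
  induction k, hmk using Nat.le_induction with
  | base => rfl
  | succ k hk ih =>
    have hk' : (m : ℝ) ≤ k := by exact_mod_cast hk
    rw [interpUpTo, projIcc_of_le_left _ (by linarith), ← ih]
    exact e.apply_zero _ _

/-- The path through `u 0, u 1, …` that runs from `u n` to `u (n + 1)` along `e` for
`s ∈ [n, n + 1]` (`interp_eq`). Near any `s` it is one of the finite recursions `interpUpTo`,
which makes it continuous jointly in the sequence and the parameter. -/
noncomputable def interp (u : ℕ → Z) (s : ℝ) : Z := e.interpUpTo u s (⌊s⌋₊ + 1)

theorem interp_eq_interpUpTo {u : ℕ → Z} {s : ℝ} {m : ℕ} (hs : s ≤ m) :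
    e.interp u s = e.interpUpTo u s m := by
  have hfloor : s ≤ (⌊s⌋₊ + 1 : ℕ) := by push_cast; exact (Nat.lt_floor_add_one s).le
  rcases le_total m (⌊s⌋₊ + 1) with h | h
  · exact e.interpUpTo_eq_of_le hs h
  · exact (e.interpUpTo_eq_of_le hfloor h).symm

theorem interp_eq {u : ℕ → Z} {s : ℝ} (hs : 0 ≤ s) :
    e.interp u s = e (u ⌊s⌋₊) (u (⌊s⌋₊ + 1)) (projIcc 0 1 zero_le_one (s - ⌊s⌋₊)) := by
  rw [interp, interpUpTo, e.interpUpTo_of_le (Nat.floor_le hs)]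

theorem continuous_interp : Continuous fun p : (ℕ → Z) × ℝ => e.interp p.1 p.2 := by
  refine continuous_iff_continuousAt.2 fun p => ?_
  have hp : p.2 < (⌊p.2⌋₊ + 1 : ℕ) := by push_cast; exact Nat.lt_floor_add_one _
  refine (e.continuous_interpUpTo (⌊p.2⌋₊ + 1)).continuousAt.congr ?_
  filter_upwards [continuous_snd.continuousAt.eventually_lt continuousAt_const hp] with q hq
  exact (e.interp_eq_interpUpTo hq.le).symm

noncomputable def level (r : ℝ) : ℝ := Real.logb 2⁻¹ r - 2

theorem tendsto_level : Tendsto level (𝓝[>] 0) atTop :=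
  tendsto_atTop_add_const_right _ _
    (Real.tendsto_logb_nhdsGT_zero_of_base_lt_one (by norm_num) (by norm_num))

theorem continuousAt_level {r : ℝ} (hr : r ≠ 0) : ContinuousAt level r :=
  (Real.continuousAt_logb hr).sub continuousAt_const

theorem lt_inv_two_pow_floor_level {r : ℝ} (hr : 0 < r) (h : 0 ≤ level r) :
    r < 2⁻¹ ^ (⌊level r⌋₊ + 1) := by
  calc r < 2 * r := by linarith
    _ = (2⁻¹ : ℝ) ^ (level r + 1) := by
      rw [level, sub_add, Real.rpow_sub (by norm_num),
        Real.rpow_logb (by norm_num) (by norm_num) hr]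
      norm_num; ring
    _ ≤ (2⁻¹ : ℝ) ^ ((⌊level r⌋₊ + 1 : ℕ) : ℝ) :=
      Real.rpow_le_rpow_of_exponent_ge (by norm_num) (by norm_num)
        (by push_cast; linarith [Nat.floor_le h])
    _ = _ := Real.rpow_natCast _ _

end Equiconnection

theorem tendsto_dist_nhdsNE {α : Type*} [MetricSpace α] (x : α) :
    Tendsto (fun y => dist y x) (𝓝[≠] x) (𝓝[>] 0) :=
  tendsto_nhdsWithin_iff.2
    ⟨((continuous_id.dist continuous_const).tendsto' x 0 (dist_self x)).mono_left
      nhdsWithin_le_nhds,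
      eventually_nhdsWithin_of_forall fun _ hy => dist_pos.2 hy⟩

section VanishingWeight

variable {α : Type*} [MetricSpace α]

noncomputable def vanishingWeight (p x y : α) : ℝ :=
  min (dist x p) (dist y p) / (min (dist x p) (dist y p) + dist x y)

theorem vanishingWeight_comm (p x y : α) : vanishingWeight p x y = vanishingWeight p y x := by
  rw [vanishingWeight, vanishingWeight, min_comm, dist_comm x y]

theorem vanishingWeight_self {p x : α} (hx : x ≠ p) : vanishingWeight p x x = 1 := by
  rw [vanishingWeight, dist_self, add_zero, min_self, div_self (dist_ne_zero.2 hx)]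

theorem vanishingWeight_base_right (p x : α) : vanishingWeight p x p = 0 := by
  rw [vanishingWeight, dist_self, min_eq_right dist_nonneg, zero_div]

theorem vanishingWeight_base_left (p y : α) : vanishingWeight p p y = 0 := by
  rw [vanishingWeight_comm, vanishingWeight_base_right]

theorem continuous_vanishingWeight_right {p x : α} (hx : x ≠ p) :
    Continuous (vanishingWeight p x) := by
  have hpos : ∀ y, 0 < min (dist x p) (dist y p) + dist x y := fun y => by
    rcases min_choice (dist x p) (dist y p) with h | h <;> rw [h]
    · linarith [dist_pos.2 hx, dist_nonneg (x := x) (y := y)]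
    · linarith [dist_pos.2 hx, dist_triangle x y p]
  exact Continuous.div (by fun_prop) (by fun_prop) fun y => (hpos y).ne'

end VanishingWeight

namespace Equiconnection

section Metric

attribute [local instance] PiCountable.metricSpace

variable {Z : Type*} [MetricSpace Z] (e : Equiconnection Z)

/-- At parameter `s` the path of `u` only involves the coordinates `⌊s⌋₊` and `⌊s⌋₊ + 1`, in
which a sequence `2⁻¹ ^ (⌊s⌋₊ + 1)`-close to `u₀` is as close to `u₀` as in `ℕ → Z`. -/
theorem exists_interp_mem {u₀ : ℕ → Z} {L : Z} (hu₀ : Tendsto u₀ atTop (𝓝 L)) {G : Set Z}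
    (hG : G ∈ 𝓝 L) :
    ∃ N : ℕ, ∀ u s, (N : ℝ) ≤ s → dist u u₀ < 2⁻¹ ^ (⌊s⌋₊ + 1) → e.interp u s ∈ G := by
  obtain ⟨ε, hε, hball⟩ := Metric.eventually_nhds_iff.1 (e.eventually_forall_mem hG)
  obtain ⟨N₁, hN₁⟩ := Metric.tendsto_atTop.1 hu₀ (ε / 2) (half_pos hε)
  obtain ⟨N₂, hN₂⟩ := exists_pow_lt_of_lt_one (half_pos hε) (by norm_num : (2⁻¹ : ℝ) < 1)
  refine ⟨max N₁ N₂, fun u s hs hu => ?_⟩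
  have hn : max N₁ N₂ ≤ ⌊s⌋₊ := Nat.le_floor hs
  have hclose : ∀ m, ⌊s⌋₊ ≤ m → m ≤ ⌊s⌋₊ + 1 → dist (u m) L < ε := by
    intro m hm hm'
    have hum : dist u u₀ < 2⁻¹ ^ m :=
      hu.trans_le (pow_le_pow_of_le_one (by norm_num) (by norm_num) hm')
    have huε : dist u u₀ < ε / 2 :=
      hu.trans_le ((pow_le_pow_of_le_one (by norm_num) (by norm_num) (by omega)).trans hN₂.le)
    calc dist (u m) L ≤ dist (u m) (u₀ m) + dist (u₀ m) L := dist_triangle _ _ _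
      _ < ε / 2 + ε / 2 :=
        add_lt_add_of_le_of_lt
          ((PiCountable.dist_le_dist_pi_of_dist_lt (by simpa using hum)).trans huε.le)
          (hN₁ m (by omega))
      _ = ε := add_halves ε
  rw [e.interp_eq ((Nat.cast_nonneg _).trans hs)]
  refine hball (y := (u ⌊s⌋₊, u (⌊s⌋₊ + 1))) ?_ _
  rw [Prod.dist_eq, max_lt_iff]
  exact ⟨hclose _ le_rfl (by omega), hclose _ (by omega) le_rfl⟩

theorem tendsto_interp_level {W : Type*} {l : Filter W} {u : W → ℕ → Z} {r : W → ℝ}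
    {v : ℕ → Z} {L : Z} (hv : Tendsto v atTop (𝓝 L)) (hr : Tendsto r l (𝓝[>] 0))
    (hur : ∀ᶠ w in l, dist (u w) v ≤ r w) :
    Tendsto (fun w => e.interp (u w) (level (r w))) l (𝓝 L) := by
  refine tendsto_def.2 fun G hG => ?_
  obtain ⟨N, hN⟩ := e.exists_interp_mem hv hG
  filter_upwards [(tendsto_level.comp hr).eventually (eventually_ge_atTop (N : ℝ)),
    hr.eventually self_mem_nhdsWithin, hur] with w hN' hr' hur'
  exact hN _ _ hN' (hur'.trans_lt
    (lt_inv_two_pow_floor_level hr' ((Nat.cast_nonneg N).trans hN')))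

theorem continuousAt_interp_level {W : Type*} [TopologicalSpace W] {u v : W → ℕ → Z} {w₀ : W}
    (hu : ContinuousAt u w₀) (hv : ContinuousAt v w₀) (hne : u w₀ ≠ v w₀) :
    ContinuousAt (fun w => e.interp (u w) (level (dist (u w) (v w)))) w₀ :=
  e.continuous_interp.continuousAt.comp (f := fun w => (u w, level (dist (u w) (v w))))
    (hu.prodMk ((continuousAt_level (dist_ne_zero.2 hne)).comp
      (f := fun w => dist (u w) (v w)) (hu.dist hv)))

variable [Nonempty Z]

open Classical in
noncomputable def limExtension (u v : ℕ → Z) : Z :=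
  if u = v then limUnder atTop u else e.interp u (level (dist u v))

theorem limExtension_self (u : ℕ → Z) : e.limExtension u u = limUnder atTop u := if_pos rfl

theorem limExtension_of_ne {u v : ℕ → Z} (h : u ≠ v) :
    e.limExtension u v = e.interp u (level (dist u v)) := if_neg h

theorem continuous_limExtension_right {u : ℕ → Z} {L : Z} (hu : Tendsto u atTop (𝓝 L)) :
    Continuous (e.limExtension u) := by
  refine continuous_iff_continuousAt.2 fun v₀ => ?_
  by_cases h : v₀ = u
  · subst h
    rw [← continuousWithinAt_compl_self, ContinuousWithinAt, limExtension_self, hu.limUnder_eq]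
    have hr : Tendsto (fun v => dist v₀ v) (𝓝[≠] v₀) (𝓝[>] 0) := by
      simpa only [dist_comm] using tendsto_dist_nhdsNE v₀
    refine (e.tendsto_interp_level (u := fun _ => v₀) hu hr
      (Eventually.of_forall fun _ => (dist_self v₀).trans_le dist_nonneg)).congr' ?_
    exact eventually_nhdsWithin_of_forall fun v hv => (e.limExtension_of_ne (Ne.symm hv)).symm
  · refine (e.continuousAt_interp_level continuousAt_const continuousAt_id (Ne.symm h)).congr ?_
    exact (eventually_ne_nhds h).mono fun v hv => (e.limExtension_of_ne (Ne.symm hv)).symm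

theorem continuous_limExtension_left {v : ℕ → Z} {L : Z} (hv : Tendsto v atTop (𝓝 L)) :
    Continuous fun u => e.limExtension u v := by
  refine continuous_iff_continuousAt.2 fun u₀ => ?_
  by_cases h : u₀ = v
  · subst h
    rw [← continuousWithinAt_compl_self, ContinuousWithinAt, limExtension_self, hv.limUnder_eq]
    refine (e.tendsto_interp_level hv (tendsto_dist_nhdsNE u₀)
      (Eventually.of_forall fun _ => le_rfl)).congr' ?_
    exact eventually_nhdsWithin_of_forall fun u hu => (e.limExtension_of_ne hu).symm
  · refine (e.continuousAt_interp_level continuousAt_id continuousAt_const h).congr ?_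
    exact (eventually_ne_nhds h).mono fun u hu => (e.limExtension_of_ne hu).symm

noncomputable def pointedLimExtension (c : Z) (u v : ℕ → Z) : Z :=
  e c (e.limExtension u v) (projIcc 0 1 zero_le_one (vanishingWeight (fun _ => c) u v))

variable {e} {c : Z}

theorem pointedLimExtension_self {u : ℕ → Z} {L : Z} (hu : Tendsto u atTop (𝓝 L)) :
    e.pointedLimExtension c u u = L := by
  by_cases h : u = fun _ => c
  · subst h
    rw [pointedLimExtension, vanishingWeight_base_left, tendsto_nhds_unique hu tendsto_const_nhds,
      projIcc_left]
    exact e.apply_zero _ _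
  · rw [pointedLimExtension, vanishingWeight_self h, projIcc_right, limExtension_self,
      hu.limUnder_eq]
    exact e.apply_one _ _

theorem pointedLimExtension_base_left (v : ℕ → Z) :
    e.pointedLimExtension c (fun _ => c) v = c := by
  rw [pointedLimExtension, vanishingWeight_base_left, projIcc_left]
  exact e.apply_zero _ _

theorem pointedLimExtension_base_right (u : ℕ → Z) :
    e.pointedLimExtension c u (fun _ => c) = c := by
  rw [pointedLimExtension, vanishingWeight_base_right, projIcc_left]
  exact e.apply_zero _ _

theorem continuous_pointedLimExtension_right {u : ℕ → Z} {L : Z}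
    (hu : Tendsto u atTop (𝓝 L)) :
    Continuous (e.pointedLimExtension c u) := by
  by_cases h : u = fun _ => c
  · subst h
    exact continuous_const.congr fun v => (pointedLimExtension_base_left v).symm
  · exact e.continuous_comp continuous_const (e.continuous_limExtension_right hu)
      (continuous_projIcc.comp (continuous_vanishingWeight_right h))

theorem continuous_pointedLimExtension_left {v : ℕ → Z} {L : Z}
    (hv : Tendsto v atTop (𝓝 L)) :
    Continuous fun u => e.pointedLimExtension c u v := by
  by_cases h : v = fun _ => c
  · subst h
    exact continuous_const.congr fun u => (pointedLimExtension_base_right u).symm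
  · simp_rw [pointedLimExtension, vanishingWeight_comm _ _ v]
    exact e.continuous_comp continuous_const (e.continuous_limExtension_left hv)
      (continuous_projIcc.comp (continuous_vanishingWeight_right h))

end Metric

end Equiconnection

theorem exists_separatelyContinuous_diag_eq_lim {X Z : Type*} [TopologicalSpace X]
    [TopologicalSpace Z] [TopologicalSpace.MetrizableSpace Z] (e : Equiconnection Z) (c : Z)
    {h : ℕ → X → Z} (hh : ∀ n, Continuous (h n)) {g : X → Z}
    (hg : ∀ x, Tendsto (fun n => h n x) atTop (𝓝 (g x))) :
    ∃ F : X → X → Z, (∀ x, Continuous (F x)) ∧ (∀ y, Continuous fun x => F x y) ∧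
      (∀ x, F x x = g x) ∧ (∀ x y, (∀ n, h n x = c) → F x y = c) ∧
      (∀ x y, (∀ n, h n y = c) → F x y = c) := by
  let _ : MetricSpace Z := TopologicalSpace.metrizableSpaceMetric Z
  have : Nonempty Z := ⟨c⟩
  have hH : Continuous fun x n => h n x := continuous_pi hh
  refine ⟨fun x y => e.pointedLimExtension c (fun n => h n x) (fun n => h n y),
    fun x => (Equiconnection.continuous_pointedLimExtension_right (hg x)).comp hH,
    fun y => (Equiconnection.continuous_pointedLimExtension_left (hg y)).comp hH,
    fun x => Equiconnection.pointedLimExtension_self (hg x), fun x y hx => ?_, fun x y hy => ?_⟩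
  · simp only [funext hx, Equiconnection.pointedLimExtension_base_left]
  · simp only [funext hy, Equiconnection.pointedLimExtension_base_right]

section BoxTopology

variable {S : Type*} {Y : S → Type*} [∀ s, TopologicalSpace (Y s)]

theorem isOpen_boxTopology_pi {G : ∀ s, Set (Y s)} (hG : ∀ s, IsOpen (G s)) :
    IsOpen[boxTopology] (univ.pi G) :=
  TopologicalSpace.GenerateOpen.basic _ ⟨G, hG, rfl⟩

theorem continuous_boxTopology_eval (s : S) :
    Continuous[boxTopology, inferInstance] fun z : ∀ s, Y s => z s := by
  classical
  refine continuous_def.2 fun V hV => ?_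
  rw [← univ_pi_update_univ]
  exact isOpen_boxTopology_pi
    ((Function.forall_update_iff _ fun t (W : Set (Y t)) => IsOpen W).2
      ⟨hV, fun _ _ => isOpen_univ⟩)

theorem continuous_boxTopology_of_eq_off_finite {W : Type*} [TopologicalSpace W]
    {f : W → ∀ s, Y s} {a : ∀ s, Y s} {A : Set S} (hA : A.Finite)
    (hf : ∀ s, Continuous fun w => f w s) (ha : ∀ w, ∀ s ∉ A, f w s = a s) :
    Continuous[inferInstance, boxTopology] f := by
  refine continuous_generateFrom_iff.2 ?_
  rintro _ ⟨G, hG, rfl⟩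
  by_cases haG : ∀ s ∉ A, a s ∈ G s
  · convert hA.isOpen_biInter fun s _ => (hG s).preimage (hf s) using 1
    ext w
    simp only [mem_preimage, mem_univ_pi, mem_iInter₂]
    refine ⟨fun hw s _ => hw s, fun hw s => ?_⟩
    by_cases hs : s ∈ A
    exacts [hw s hs, ha w s hs ▸ haG s hs]
  · obtain ⟨s, hs, hsG⟩ := not_forall₂.1 haG
    convert isOpen_empty
    exact eq_empty_of_forall_notMem fun w hw => hsG (ha w s hs ▸ hw s (mem_univ s))

theorem finite_iUnion_ne_of_tendsto_boxTopology [∀ s, T1Space (Y s)] {u : ℕ → ∀ s, Y s}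
    {v : ∀ s, Y s} (huv : Tendsto u atTop (@nhds _ boxTopology v))
    (hfin : ∀ n, {s | u n s ≠ v s}.Finite) : (⋃ n, {s | u n s ≠ v s}).Finite := by
  classical
  let _ : TopologicalSpace (∀ s, Y s) := boxTopology
  by_contra hinf
  set U := ⋃ n, {s | u n s ≠ v s}
  choose! μ hμ using fun s (hs : s ∈ U) => mem_iUnion.1 hs
  have hunb : ∀ N, ∃ s ∈ U, N ≤ μ s := by
    intro N
    by_contra! hN
    exact hinf (((finite_Iio N).biUnion fun n _ => hfin n).subset
      fun s hs => mem_biUnion (hN s hs) (hμ s hs))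
  let G : ∀ s, Set (Y s) := fun s => if s ∈ U then {u (μ s) s}ᶜ else univ
  have hG : IsOpen[boxTopology] (univ.pi G) := isOpen_boxTopology_pi fun s => by
    by_cases hs : s ∈ U <;> simp [G, hs]
  have hvG : v ∈ univ.pi G := fun s _ => by
    by_cases hs : s ∈ U
    · simpa [G, hs] using (hμ s hs).symm
    · simp [G, hs]
  obtain ⟨N, hN⟩ := eventually_atTop.1 (huv.eventually (hG.mem_nhds hvG))
  obtain ⟨s, hs, hsN⟩ := hunb N
  simpa [G, hs] using hN (μ s) hsN s (mem_univ s)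

theorem finite_setOf_exists_ne_of_tendsto_smallBox [∀ s, T1Space (Y s)] {a : ∀ s, Y s}
    {u : ℕ → ∀ s, Y s} {v : ∀ s, Y s} (hu : ∀ n, u n ∈ smallBox a) (hv : v ∈ smallBox a)
    (huv : Tendsto u atTop (@nhds _ boxTopology v)) : {s | ∃ n, u n s ≠ a s}.Finite := by
  refine ((finite_iUnion_ne_of_tendsto_boxTopology huv fun n =>
    ((hu n).union hv).subset ?_).union hv).subset ?_
  · intro s hs
    by_contra h
    simp only [mem_union, mem_ofPred_eq, not_or, not_not] at h
    exact hs (h.1.trans h.2.symm)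
  · rintro s ⟨n, hn⟩
    by_cases hvs : v s = a s
    · exact Or.inl (mem_iUnion.2 ⟨n, fun h => hn (h.trans hvs)⟩)
    · exact Or.inr hvs

end BoxTopology

theorem stmt_13_general {X : Type*} [TopologicalSpace X]
    {S : Type*} {Z : S → Type*} [∀ s, TopologicalSpace (Z s)]
    [∀ s, TopologicalSpace.MetrizableSpace (Z s)]
    (lam : ∀ s, Z s → Z s → unitInterval → Z s)
    (hlamc : ∀ s, Continuous fun p : Z s × Z s × unitInterval => lam s p.1 p.2.1 p.2.2)
    (h0 : ∀ s (x y : Z s), lam s x y 0 = x)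
    (h1 : ∀ s (x y : Z s), lam s x y 1 = y)
    (hd : ∀ s (x : Z s) (t : unitInterval), lam s x x t = x)
    (a : ∀ s, Z s) :
    letI : TopologicalSpace (∀ s, Z s) := boxTopology
    ∀ g : X → ↥(smallBox a),
      (∃ h : ℕ → X → ↥(smallBox a), (∀ n, Continuous (h n)) ∧
        ∀ x, Tendsto (fun n => h n x) atTop (nhds (g x))) →
      ∃ f : X → X → ↥(smallBox a),
        (∀ x, Continuous (f x)) ∧ (∀ y, Continuous fun x => f x y) ∧
        ∀ x, f x x = g x := by
  let _ : TopologicalSpace (∀ s, Z s) := boxTopology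
  rintro g ⟨h, hh, hlim⟩
  have hcoord : ∀ s, Continuous fun z : smallBox a => (z : ∀ s, Z s) s := fun s =>
    (continuous_boxTopology_eval s).comp continuous_subtype_val
  choose F hFx hFy hFdiag hFleft hFright using fun s =>
    exists_separatelyContinuous_diag_eq_lim ⟨lam s, hlamc s, h0 s, h1 s, hd s⟩ (a s)
      (fun n => (hcoord s).comp (hh n)) fun x => ((hcoord s).tendsto (g x)).comp (hlim x)
  have hsupp : ∀ x, {s | ∃ n, (h n x : ∀ s, Z s) s ≠ a s}.Finite := fun x =>
    finite_setOf_exists_ne_of_tendsto_smallBox (fun n => (h n x).2) (g x).2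
      ((continuous_subtype_val.tendsto (g x)).comp (hlim x))
  have hleft : ∀ x y, ∀ s ∉ {s | ∃ n, (h n x : ∀ s, Z s) s ≠ a s}, F s x y = a s :=
    fun x y s hs => hFleft s x y (by simpa using hs)
  have hright : ∀ x y, ∀ s ∉ {s | ∃ n, (h n y : ∀ s, Z s) s ≠ a s}, F s x y = a s :=
    fun x y s hs => hFright s x y (by simpa using hs)
  refine ⟨fun x y => ⟨fun s => F s x y, (hsupp x).subset fun s hs => by_contra fun hs' =>
      hs (hleft x y s hs')⟩, fun x => ?_, fun y => ?_,
    fun x => Subtype.ext (funext fun s => hFdiag s x)⟩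
  · exact (continuous_boxTopology_of_eq_off_finite (hsupp x) (fun s => hFx s x)
      (hleft x)).subtype_mk _
  · exact (continuous_boxTopology_of_eq_off_finite (hsupp y) (fun s => hFy s y)
      fun x => hright x y).subtype_mk _

theorem stmt_13 {X : Type*} [TopologicalSpace X] [ParacompactSpace X]
    {S : Type*} {Z : S → Type*} [∀ s, TopologicalSpace (Z s)]
    [∀ s, TopologicalSpace.MetrizableSpace (Z s)]
    (lam : ∀ s, Z s → Z s → unitInterval → Z s)
    (hlamc : ∀ s, Continuous fun p : Z s × Z s × unitInterval => lam s p.1 p.2.1 p.2.2)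
    (h0 : ∀ s (x y : Z s), lam s x y 0 = x)
    (h1 : ∀ s (x y : Z s), lam s x y 1 = y)
    (hd : ∀ s (x : Z s) (t : unitInterval), lam s x x t = x)
    (a : ∀ s, Z s) :
    letI : TopologicalSpace (∀ s, Z s) := boxTopology
    ∀ g : X → ↥(smallBox a),
      (∃ h : ℕ → X → ↥(smallBox a), (∀ n, Continuous (h n)) ∧
        ∀ x, Tendsto (fun n => h n x) atTop (nhds (g x))) →
      ∃ f : X → X → ↥(smallBox a),
        (∀ x, Continuous (f x)) ∧ (∀ y, Continuous fun x => f x y) ∧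
        ∀ x, f x x = g x :=
  stmt_13_general lam hlamc h0 h1 hd a
end
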